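/- arXiv:1708.04527 — 5 statements merged into one kernel-verified Lean document; each statement's English description precedes it below -/
import Mathlib

section
/- For any y ∈ ℝⁿ, X ∈ ℝ^{n×p}, λ > 0 and k ∈ {0,1,…,p}, the following three optimization problems have the same optimal objective value: (i) min over β ∈ ℝ^p of ½‖y − Xβ‖₂² + λ T_k(β); (ii) min over β, φ ∈ ℝ^p with ‖φ‖₀ ≤ k of ½‖y − Xβ‖₂² + λ‖β − φ‖₁; (iii) min over φ, ε ∈ ℝ^p with ‖φ‖₀ ≤ k of ½‖y − X(φ + ε)‖₂² + λ‖ε‖₁. -/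
open Finset

/-- Absolute values of the entries of `β`, sorted in increasing order. -/
noncomputable def sortAbs {p : ℕ} (β : Fin p → ℝ) : Fin p → ℝ :=
  fun i => |β (Tuple.sort (fun j => |β j|) i)|

/-- The trimmed Lasso penalty `T_k(β)`: sum of the `p - k` smallest `|β_i|`. -/
noncomputable def trimmedLasso {p : ℕ} (k : ℕ) (β : Fin p → ℝ) : ℝ :=
  ∑ i ∈ Finset.univ.filter (fun i : Fin p => (i : ℕ) < p - k), sortAbs β i

/-- `‖β‖₀`: the number of nonzero entries of `β`. -/
noncomputable def l0 {p : ℕ} (β : Fin p → ℝ) : ℕ :=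
  (Finset.univ.filter (fun i => β i ≠ 0)).card

/-- `‖β‖₁`: the ℓ₁ norm. -/
noncomputable def l1 {p : ℕ} (β : Fin p → ℝ) : ℝ := ∑ i, |β i|

/-- The least squares loss `½‖y - Xβ‖₂²`. -/
noncomputable def lsObj {n p : ℕ} (y : Fin n → ℝ) (X : Matrix (Fin n) (Fin p) ℝ)
    (β : Fin p → ℝ) : ℝ :=
  (1 / 2) * ∑ i, (y i - X.mulVec β i) ^ 2

/- ---------- auxiliary lemmas ---------- -/

lemma aux_le_emb {m p : ℕ} (e : Fin m ↪o Fin p) (i : Fin m) : (i : ℕ) ≤ (e i : ℕ) := by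
  obtain ⟨i, hi⟩ := i
  induction i with
  | zero => exact Nat.zero_le _
  | succ j ih =>
    have hj : j < m := by omega
    have h1 : (e ⟨j, hj⟩ : ℕ) < (e ⟨j + 1, hi⟩ : ℕ) := by
      exact e.strictMono (show (⟨j, hj⟩ : Fin m) < ⟨j + 1, hi⟩ by simp [Fin.lt_def])
    have h2 : j ≤ (e ⟨j, hj⟩ : ℕ) := ih hj
    show j + 1 ≤ (e ⟨j + 1, hi⟩ : ℕ)
    omega

lemma aux_filter_lt_eq_map {p m : ℕ} (h : m ≤ p) :
    Finset.univ.filter (fun i : Fin p => (i : ℕ) < m) =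
      Finset.univ.map (Fin.castLEEmb h) := by
  ext i
  simp only [mem_filter, mem_univ, true_and, mem_map, Fin.castLEEmb]
  constructor
  · intro hi
    exact ⟨⟨(i : ℕ), hi⟩, by ext; simp⟩
  · rintro ⟨j, rfl⟩
    simpa using j.2

lemma aux_card_filter_lt {p m : ℕ} (h : m ≤ p) :
    (Finset.univ.filter (fun i : Fin p => (i : ℕ) < m)).card = m := by
  rw [aux_filter_lt_eq_map h]; simp

lemma aux_sum_small_le {p m : ℕ} (g : Fin p → ℝ) (hg : Monotone g) (h0 : ∀ i, 0 ≤ g i)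
    (T : Finset (Fin p)) (hT : m ≤ T.card) :
    ∑ i ∈ Finset.univ.filter (fun i : Fin p => (i : ℕ) < m), g i ≤ ∑ i ∈ T, g i := by
  obtain ⟨T', hsub, hcard⟩ := Finset.exists_subset_card_eq hT
  have hmp : m ≤ p := by
    have := T'.card_le_univ
    simpa [hcard] using this
  have key : ∑ i ∈ Finset.univ.filter (fun i : Fin p => (i : ℕ) < m), g i ≤
      ∑ i ∈ T', g i := by
    set e := T'.orderEmbOfFin hcard with he
    have hT'eq : T' = Finset.univ.map e.toEmbedding := by
      ext i
      simp only [mem_map, mem_univ, true_and, RelEmbedding.coe_toEmbedding]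
      constructor
      · intro hi
        have : i ∈ Set.range e := by rw [Finset.range_orderEmbOfFin]; exact hi
        obtain ⟨j, hj⟩ := this
        exact ⟨j, hj⟩
      · rintro ⟨j, rfl⟩
        exact Finset.orderEmbOfFin_mem _ _ _
    rw [aux_filter_lt_eq_map hmp, hT'eq, Finset.sum_map, Finset.sum_map]
    apply Finset.sum_le_sum
    intro j _
    apply hg
    rw [Fin.le_def]
    have h1 : ((Fin.castLEEmb hmp j : Fin p) : ℕ) = (j : ℕ) := rfl
    rw [h1]
    exact aux_le_emb e j
  exact key.trans (Finset.sum_le_sum_of_subset_of_nonneg hsub fun i _ _ => h0 i)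

lemma aux_sortAbs_monotone {p : ℕ} (β : Fin p → ℝ) : Monotone (sortAbs β) :=
  Tuple.monotone_sort (fun j => |β j|)

lemma aux_filter_perm {p : ℕ} (σ : Equiv.Perm (Fin p)) (P : Fin p → Prop)
    [DecidablePred P] :
    Finset.univ.filter (fun j => P (σ.symm j)) = (Finset.univ.filter P).image σ := by
  ext j
  simp only [mem_filter, mem_univ, true_and, mem_image]
  constructor
  · intro h
    exact ⟨σ.symm j, h, by simp⟩
  · rintro ⟨i, hi, rfl⟩
    simpa using hi

/-- Lower bound: for any `φ` with `‖φ‖₀ ≤ k`, `T_k(β) ≤ ‖β - φ‖₁`. -/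
lemma aux_trimmed_le {p k : ℕ} (hk : k ≤ p) (β φ : Fin p → ℝ) (hφ : l0 φ ≤ k) :
    trimmedLasso k β ≤ l1 (β - φ) := by
  classical
  set σ := Tuple.sort (fun j => |β j|) with hσ
  set S := Finset.univ.filter (fun j : Fin p => φ j = 0) with hS
  have hScard : p - k ≤ S.card := by
    have h := Finset.card_filter_add_card_filter_not
      (s := (Finset.univ : Finset (Fin p))) (p := fun j => φ j = 0)
    have hcu : (Finset.univ : Finset (Fin p)).card = p := by simp
    have : S.card + l0 φ = p := by
      rw [hS]
      unfold l0
      have h2 : (filter (fun i => φ i ≠ 0) univ : Finset (Fin p)) =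
          filter (fun a => ¬ φ a = 0) univ := rfl
      rw [h2]
      exact h.trans hcu
    omega
  set T := S.image σ.symm with hT
  have hTcard : T.card = S.card := Finset.card_image_of_injective _ σ.symm.injective
  have h1 : trimmedLasso k β ≤ ∑ i ∈ T, sortAbs β i := by
    unfold trimmedLasso
    exact aux_sum_small_le (sortAbs β) (aux_sortAbs_monotone β)
      (fun i => abs_nonneg _) T (by omega)
  have h2 : ∑ i ∈ T, sortAbs β i = ∑ j ∈ S, |β j| := by
    rw [hT, Finset.sum_image (fun a _ b _ h => σ.symm.injective h)]
    apply Finset.sum_congr rfl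
    intro j _
    unfold sortAbs
    rw [← hσ]
    simp
  have h3 : ∑ j ∈ S, |β j| ≤ l1 (β - φ) := by
    unfold l1
    have : ∀ j ∈ S, |β j| = |(β - φ) j| := by
      intro j hj
      rw [hS] at hj
      simp only [mem_filter] at hj
      simp [Pi.sub_apply, hj.2]
    rw [Finset.sum_congr rfl this]
    exact Finset.sum_le_sum_of_subset_of_nonneg (Finset.subset_univ S)
      (fun i _ _ => abs_nonneg _)
  linarith

/-- Attainment: there is `φ` with `‖φ‖₀ ≤ k` and `‖β - φ‖₁ = T_k(β)`. -/
lemma aux_trimmed_attained {p k : ℕ} (hk : k ≤ p) (β : Fin p → ℝ) :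
    ∃ φ : Fin p → ℝ, l0 φ ≤ k ∧ l1 (β - φ) = trimmedLasso k β := by
  classical
  set σ := Tuple.sort (fun j => |β j|) with hσ
  refine ⟨fun j => if ((σ.symm j : ℕ) < p - k) then 0 else β j, ?_, ?_⟩
  · unfold l0
    have hsub : (Finset.univ.filter
        (fun j => (if ((σ.symm j : ℕ) < p - k) then 0 else β j) ≠ 0)) ⊆
        Finset.univ.filter (fun j : Fin p => ¬ ((σ.symm j : ℕ) < p - k)) := by
      intro j hj
      simp only [mem_filter, mem_univ, true_and] at hj ⊢
      intro h
      exact hj (by simp [h])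
    calc _ ≤ (Finset.univ.filter (fun j : Fin p => ¬ ((σ.symm j : ℕ) < p - k))).card :=
          Finset.card_le_card hsub
      _ = (Finset.univ.filter (fun i : Fin p => ¬ ((i : ℕ) < p - k))).card := by
          rw [aux_filter_perm σ (fun i : Fin p => ¬ ((i : ℕ) < p - k))]
          exact Finset.card_image_of_injective _ σ.injective
      _ = k := by
          have h := Finset.card_filter_add_card_filter_not
            (s := (Finset.univ : Finset (Fin p)))
            (p := fun i : Fin p => (i : ℕ) < p - k)
          have h2 := aux_card_filter_lt (p := p) (m := p - k) (by omega)
          have hcu : (Finset.univ : Finset (Fin p)).card = p := by simp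
          omega
  · unfold l1 trimmedLasso
    have hterm : ∀ j : Fin p,
        |(β - fun j => if ((σ.symm j : ℕ) < p - k) then 0 else β j) j| =
        if ((σ.symm j : ℕ) < p - k) then |β j| else 0 := by
      intro j
      by_cases h : (σ.symm j : ℕ) < p - k <;> simp [h]
    rw [Finset.sum_congr rfl (fun j _ => hterm j)]
    rw [Finset.sum_ite, Finset.sum_const_zero, add_zero]
    rw [show (Finset.univ.filter (fun j : Fin p => (σ.symm j : ℕ) < p - k)) =
        (Finset.univ.filter (fun i : Fin p => (i : ℕ) < p - k)).image σ from
      aux_filter_perm σ (fun i : Fin p => (i : ℕ) < p - k)]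
    rw [Finset.sum_image (fun a _ b _ h => σ.injective h)]
    apply Finset.sum_congr rfl
    intro i _
    unfold sortAbs
    rw [← hσ]

lemma aux_lsObj_nonneg {n p : ℕ} (y : Fin n → ℝ) (X : Matrix (Fin n) (Fin p) ℝ)
    (β : Fin p → ℝ) : 0 ≤ lsObj y X β := by
  unfold lsObj
  positivity

lemma aux_trimmed_nonneg {p k : ℕ} (β : Fin p → ℝ) : 0 ≤ trimmedLasso k β :=
  Finset.sum_nonneg fun i _ => abs_nonneg _

lemma aux_l1_nonneg {p : ℕ} (β : Fin p → ℝ) : 0 ≤ l1 β :=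
  Finset.sum_nonneg fun i _ => abs_nonneg _

/-- the trimmed Lasso problem, its split form
`min_{β,φ : ‖φ‖₀ ≤ k} ½‖y-Xβ‖² + λ‖β-φ‖₁`, and the decomposed form
`min_{φ,ε : ‖φ‖₀ ≤ k} ½‖y-X(φ+ε)‖² + λ‖ε‖₁` all have the same optimal value. -/
theorem trimmedLasso_split_representations {n p : ℕ} (y : Fin n → ℝ)
    (X : Matrix (Fin n) (Fin p) ℝ) (lam : ℝ) (hlam : 0 < lam) (k : ℕ) (hk : k ≤ p) :
    sInf {v : ℝ | ∃ β : Fin p → ℝ, v = lsObj y X β + lam * trimmedLasso k β} =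
      sInf {v : ℝ | ∃ β φ : Fin p → ℝ, l0 φ ≤ k ∧
        v = lsObj y X β + lam * l1 (β - φ)} ∧
    sInf {v : ℝ | ∃ β : Fin p → ℝ, v = lsObj y X β + lam * trimmedLasso k β} =
      sInf {v : ℝ | ∃ φ ε : Fin p → ℝ, l0 φ ≤ k ∧
        v = lsObj y X (φ + ε) + lam * l1 ε} := by
  set A := {v : ℝ | ∃ β : Fin p → ℝ, v = lsObj y X β + lam * trimmedLasso k β} with hA
  set B := {v : ℝ | ∃ β φ : Fin p → ℝ, l0 φ ≤ k ∧
      v = lsObj y X β + lam * l1 (β - φ)} with hB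
  set C := {v : ℝ | ∃ φ ε : Fin p → ℝ, l0 φ ≤ k ∧
      v = lsObj y X (φ + ε) + lam * l1 ε} with hC
  have hBC : B = C := by
    ext v
    constructor
    · rintro ⟨β, φ, hφ, rfl⟩
      exact ⟨φ, β - φ, hφ, by simp⟩
    · rintro ⟨φ, ε, hφ, rfl⟩
      exact ⟨φ + ε, φ, hφ, by simp⟩
  have hAne : A.Nonempty := ⟨_, ⟨0, rfl⟩⟩
  have hBne : B.Nonempty := ⟨_, ⟨0, 0, by simp [l0], rfl⟩⟩
  have hAbdd : BddBelow A := by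
    refine ⟨0, fun v hv => ?_⟩
    obtain ⟨β, rfl⟩ := hv
    have := aux_lsObj_nonneg y X β
    have := aux_trimmed_nonneg (k := k) β
    nlinarith
  have hBbdd : BddBelow B := by
    refine ⟨0, fun v hv => ?_⟩
    obtain ⟨β, φ, hφ, rfl⟩ := hv
    have := aux_lsObj_nonneg y X β
    have := aux_l1_nonneg (β - φ)
    nlinarith
  have hAsubB : A ⊆ B := by
    rintro v ⟨β, rfl⟩
    obtain ⟨φ, hφ, heq⟩ := aux_trimmed_attained hk β
    exact ⟨β, φ, hφ, by rw [heq]⟩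
  have h1 : sInf A = sInf B := by
    apply le_antisymm
    · apply le_csInf hBne
      rintro v ⟨β, φ, hφ, rfl⟩
      have hle : lsObj y X β + lam * trimmedLasso k β ≤
          lsObj y X β + lam * l1 (β - φ) := by
        have := aux_trimmed_le hk β φ hφ
        nlinarith
      exact (csInf_le hAbdd ⟨β, rfl⟩).trans hle
    · exact csInf_le_csInf hBbdd hAne hAsubB
  exact ⟨h1, by rw [h1, hBC]⟩
end

section
/- Let g : ℝ₊ → ℝ₊ be an unbounded, continuous, strictly increasing function with g(0) = 0, and let k ∈ {0,1,…,p}. Then for every β ∈ ℝ^p, the k-th projected penalty satisfies π_k^g(β) = Σ_{i=k+1}^p g(|β_(i)|), i.e., the minimum of Σ_{i=1}^p g(|φᵢ − βᵢ|) over vectors φ with at most k nonzero entries equals the sum of g evaluated at the p − k smallest absolute values of entries of β. -/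
open Finset

lemma strictMono_le_val {m p : ℕ} (e : Fin m → Fin p) (he : StrictMono e) :
    ∀ i : Fin m, (i : ℕ) ≤ (e i : ℕ) := by
  intro i
  induction' hn : (i : ℕ) with n ih generalizing i
  · exact Nat.zero_le _
  · have hlt : n < m := by omega
    have h1 : (⟨n, hlt⟩ : Fin m) < i := by simp [Fin.lt_def, hn]
    have h2 := he h1
    have h3 := ih ⟨n, hlt⟩ rfl
    rw [Fin.lt_def] at h2
    omega

lemma sum_smallest_le {p m : ℕ} (w : Fin p → ℝ) (hw : Monotone w)
    (hnn : ∀ i, 0 ≤ w i) (T : Finset (Fin p)) (hT : m ≤ T.card) :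
    ∑ j ∈ Finset.univ.filter (fun j : Fin p => (j : ℕ) < m), w j ≤ ∑ j ∈ T, w j := by
  obtain ⟨S, hST, hScard⟩ := Finset.exists_subset_card_eq hT
  have hmp : m ≤ p := by
    calc m = S.card := hScard.symm
    _ ≤ (Finset.univ : Finset (Fin p)).card := Finset.card_le_card (Finset.subset_univ S)
    _ = p := by simp
  have key : ∑ j ∈ Finset.univ.filter (fun j : Fin p => (j : ℕ) < m), w j ≤ ∑ j ∈ S, w j := by
    have e := S.orderEmbOfFin hScard
    have hSim : S = Finset.univ.image (S.orderEmbOfFin hScard) := by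
      apply Finset.eq_of_subset_of_card_le
      · intro x hx
        have : x ∈ Set.range (S.orderEmbOfFin hScard) := by
          rw [Finset.range_orderEmbOfFin]; exact hx
        obtain ⟨i, hi⟩ := this
        exact Finset.mem_image.2 ⟨i, Finset.mem_univ _, hi⟩
      · rw [Finset.card_image_of_injective _ (S.orderEmbOfFin hScard).injective]
        simp [hScard]
    have hfilt : Finset.univ.filter (fun j : Fin p => (j : ℕ) < m)
        = Finset.univ.image (Fin.castLE hmp) := by
      ext x
      simp only [Finset.mem_filter, Finset.mem_univ, true_and, Finset.mem_image]
      constructor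
      · intro hx; exact ⟨⟨x, hx⟩, rfl⟩
      · rintro ⟨i, rfl⟩; simpa using i.2
    rw [hSim, hfilt, Finset.sum_image (by intro a _ b _ h; exact Fin.castLE_injective hmp h),
      Finset.sum_image (by intro a _ b _ h; exact (S.orderEmbOfFin hScard).injective h)]
    apply Finset.sum_le_sum
    intro i _
    apply hw
    have := strictMono_le_val _ (S.orderEmbOfFin hScard).strictMono i
    simpa [Fin.le_def] using this
  calc ∑ j ∈ Finset.univ.filter (fun j : Fin p => (j : ℕ) < m), w j ≤ ∑ j ∈ S, w j := key
  _ ≤ ∑ j ∈ T, w j := Finset.sum_le_sum_of_subset_of_nonneg hST (fun i _ _ => hnn i)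

lemma filter_lt_eq_image {p m : ℕ} (hmp : m ≤ p) :
    Finset.univ.filter (fun j : Fin p => (j : ℕ) < m)
      = Finset.univ.image (Fin.castLE hmp) := by
  ext x
  simp only [Finset.mem_filter, Finset.mem_univ, true_and, Finset.mem_image]
  constructor
  · intro hx; exact ⟨⟨x, hx⟩, rfl⟩
  · rintro ⟨i, rfl⟩; simpa using i.2

lemma card_filter_lt {p m : ℕ} (hmp : m ≤ p) :
    (Finset.univ.filter (fun j : Fin p => (j : ℕ) < m)).card = m := by
  rw [filter_lt_eq_image hmp,
    Finset.card_image_of_injective _ (Fin.castLE_injective hmp)]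
  simp


/-- for `g : ℝ₊ → ℝ₊` unbounded, continuous, strictly increasing
with `g(0) = 0`, the `k`-th projected penalty
`π_k^g(β) = min_{‖φ‖₀ ≤ k} ∑_i g(|φ_i - β_i|)` is attained and equals
`∑_{i=k+1}^p g(|β_(i)|)`, the sum of `g` applied to the `p - k` smallest
absolute values of the entries of `β`. -/
theorem projectedPenalty_eq_trimmed {p : ℕ} (g : ℝ → ℝ)
    (hg0 : g 0 = 0)
    (hnonneg : ∀ x, 0 ≤ x → 0 ≤ g x)
    (hmono : StrictMonoOn g (Set.Ici (0 : ℝ)))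
    (hcont : ContinuousOn g (Set.Ici (0 : ℝ)))
    (hunbounded : ∀ M : ℝ, ∃ x, 0 ≤ x ∧ M < g x)
    (k : ℕ) (hk : k ≤ p) (β : Fin p → ℝ) :
    IsLeast {s : ℝ | ∃ φ : Fin p → ℝ, l0 φ ≤ k ∧ s = ∑ i, g |φ i - β i|}
      (∑ i ∈ Finset.univ.filter (fun i : Fin p => (i : ℕ) < p - k),
        g (sortAbs β i)) := by
  set σ : Equiv.Perm (Fin p) := Tuple.sort (fun j : Fin p => |β j|) with hσdef
  have hmonoσ : Monotone (fun j : Fin p => |β (σ j)|) :=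
    Tuple.monotone_sort (fun j : Fin p => |β j|)
  have hsa : ∀ i, sortAbs β i = |β (σ i)| := fun i => rfl
  constructor
  · -- membership: zero out the p-k smallest entries
    refine ⟨fun j => if ((σ.symm j : ℕ)) < p - k then 0 else β j, ?_, ?_⟩
    · unfold l0
      have hsub : (Finset.univ.filter
            (fun j : Fin p => (if ((σ.symm j : ℕ)) < p - k then 0 else β j) ≠ 0))
          ⊆ Finset.univ.filter (fun j : Fin p => ¬ ((σ.symm j : ℕ) < p - k)) := by
        intro j hj
        simp only [Finset.mem_filter, Finset.mem_univ, true_and] at *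
        intro h; exact hj (by simp [h])
      refine le_trans (Finset.card_le_card hsub) ?_
      have hcard : (Finset.univ.filter (fun j : Fin p => ¬ ((σ.symm j : ℕ) < p - k))).card
          = (Finset.univ.filter (fun i : Fin p => ¬ ((i : ℕ) < p - k))).card := by
        apply Finset.card_bij (fun j _ => σ.symm j)
        · intro j hj
          simp only [Finset.mem_filter, Finset.mem_univ, true_and] at *
          exact hj
        · intro a _ b _ h; exact σ.symm.injective h
        · intro b hb
          refine ⟨σ b, ?_, by simp⟩
          simp only [Finset.mem_filter, Finset.mem_univ, true_and] at *
          simpa using hb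
      rw [hcard]
      have := Finset.card_filter_add_card_filter_not
        (s := (Finset.univ : Finset (Fin p))) (p := fun i : Fin p => (i : ℕ) < p - k)
      rw [card_filter_lt (Nat.sub_le p k)] at this
      simp only [Finset.card_univ, Fintype.card_fin] at this
      omega
    · have hterm : ∀ j : Fin p,
          g |(if ((σ.symm j : ℕ)) < p - k then 0 else β j) - β j|
            = if ((σ.symm j : ℕ)) < p - k then g |β j| else 0 := by
        intro j
        split_ifs with h <;> simp [hg0]
      rw [Finset.sum_congr rfl (fun j _ => hterm j), ← Finset.sum_filter]
      refine Finset.sum_equiv σ ?_ ?_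
      · intro i
        simp only [Finset.mem_filter, Finset.mem_univ, true_and, Equiv.symm_apply_apply]
      · intro i _
        rw [hsa]
  · -- lower bound
    rintro s ⟨φ, hφ, rfl⟩
    set Z : Finset (Fin p) := Finset.univ.filter (fun i => φ i = 0) with hZdef
    have hZcard : p - k ≤ Z.card := by
      have := Finset.card_filter_add_card_filter_not
        (s := (Finset.univ : Finset (Fin p))) (p := fun i : Fin p => φ i ≠ 0)
      unfold l0 at hφ
      have hZ' : Z = Finset.univ.filter (fun i : Fin p => ¬ φ i ≠ 0) := by
        simp [hZdef]
      rw [hZ']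
      simp only [Finset.card_univ, Fintype.card_fin] at this
      omega
    have step2 : (∑ i ∈ Finset.univ.filter (fun i : Fin p => (i : ℕ) < p - k),
          g (sortAbs β i)) ≤ ∑ i ∈ Z, g |β i| := by
      have := sum_smallest_le (m := p - k) (fun j : Fin p => g |β (σ j)|)
        (fun i j hij => hmono.monotoneOn (Set.mem_Ici.mpr (abs_nonneg _))
          (Set.mem_Ici.mpr (abs_nonneg _)) (hmonoσ hij))
        (fun i => hnonneg _ (abs_nonneg _)) (Z.image σ.symm)
        (by rw [Finset.card_image_of_injective _ σ.symm.injective]; exact hZcard)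
      rw [Finset.sum_image (fun a _ b _ h => σ.symm.injective h)] at this
      simp only [Equiv.apply_symm_apply] at this
      calc (∑ i ∈ Finset.univ.filter (fun i : Fin p => (i : ℕ) < p - k), g (sortAbs β i))
          = ∑ i ∈ Finset.univ.filter (fun i : Fin p => (i : ℕ) < p - k), g |β (σ i)| := by
            exact Finset.sum_congr rfl (fun i _ => by rw [hsa])
        _ ≤ ∑ i ∈ Z, g |β i| := this
    refine le_trans step2 ?_
    have heq : ∑ i ∈ Z, g |β i| = ∑ i ∈ Z, g |φ i - β i| := by
      refine Finset.sum_congr rfl (fun i hi => ?_)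
      have : φ i = 0 := by
        simp only [hZdef, Finset.mem_filter] at hi
        exact hi.2
      rw [this]
      simp
    rw [heq]
    exact Finset.sum_le_sum_of_subset_of_nonneg (Finset.subset_univ Z)
      (fun i _ _ => hnonneg _ (abs_nonneg _))
end

section
/- Let y ∈ ℝⁿ, X ∈ ℝ^{n×p}, λ > 0 and k ∈ {0,1,…,p}, and let U_k^λ = {Δ ∈ ℝ^{n×p} : Δ has at most k nonzero columns and ‖Δᵢ‖₂ ≤ λ for all i}. Then for every β ∈ ℝ^p, the minimum over Δ ∈ U_k^λ of ‖y − (X + Δ)β‖₂ is attained and equals max{0, ‖y − Xβ‖₂ − λ Σ_{i=1}^k |β_(i)|}. -/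
/-!
Write `r = y - Xβ`. For any admissible `Δ`, `Δβ = ∑ βᵢ Δᵢ` runs over at most `k` columns of
norm `≤ λ`, so `‖Δβ‖₂ ≤ λ ∑_{i=1}^k |β_(i)|`, and the reverse triangle inequality gives the
lower bound. Conversely the rank-one matrix whose columns on the `k` largest `|βᵢ|` are
`a λ sign(βᵢ) r / ‖r‖₂` (all others zero) has `Δβ = a λ (∑_{i=1}^k |β_(i)|) r / ‖r‖₂`; choosing
`a ∈ [0, 1]` as large as possible without overshooting `r` attains the bound.
-/

open Finset

/-- `∑_{i=1}^k |β_(i)|`: the sum of the `k` largest absolute values of entries of `β`. -/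
noncomputable def topSum {p : ℕ} (k : ℕ) (β : Fin p → ℝ) : ℝ :=
  ∑ i ∈ Finset.univ.filter (fun i : Fin p => p - k ≤ (i : ℕ)), sortAbs β i

/-- The Euclidean norm of a vector. -/
noncomputable def norm2 {m : ℕ} (v : Fin m → ℝ) : ℝ := Real.sqrt (∑ i, v i ^ 2)

/-- The uncertainty set `U_k^λ`: matrices with at most `k` nonzero columns, each
column of Euclidean norm at most `λ`. -/
noncomputable def kColBound {n p : ℕ} (k : ℕ) (lam : ℝ) : Set (Matrix (Fin n) (Fin p) ℝ) :=
  {Δ | (Finset.univ.filter (fun i : Fin p => ∃ j, Δ j i ≠ 0)).card ≤ k ∧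
    ∀ i : Fin p, norm2 (fun j => Δ j i) ≤ lam}

open Matrix

section norm2

variable {m : ℕ}

lemma norm2_eq_norm (v : Fin m → ℝ) : norm2 v = ‖WithLp.toLp 2 v‖ := by
  simp [norm2, EuclideanSpace.norm_eq]

lemma norm2_nonneg (v : Fin m → ℝ) : 0 ≤ norm2 v :=
  Real.sqrt_nonneg _

lemma norm2_smul (c : ℝ) (v : Fin m → ℝ) : norm2 (c • v) = |c| * norm2 v := by
  simp [norm2_eq_norm, norm_smul]

lemma norm2_sub_norm2_le (a b : Fin m → ℝ) : norm2 a - norm2 b ≤ norm2 (a - b) := by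
  simpa [norm2_eq_norm] using norm_sub_norm_le (WithLp.toLp 2 a) (WithLp.toLp 2 b)

lemma norm2_sum_le {ι : Type*} (s : Finset ι) (f : ι → Fin m → ℝ) :
    norm2 (∑ i ∈ s, f i) ≤ ∑ i ∈ s, norm2 (f i) := by
  simpa [norm2_eq_norm, WithLp.toLp_sum] using norm_sum_le s fun i => WithLp.toLp 2 (f i)

end norm2

lemma norm_sub_min_div_norm_smul_self {E : Type*} [NormedAddCommGroup E] [NormedSpace ℝ E]
    (r : E) {c : ℝ} (hc : 0 ≤ c) : ‖r - (min c ‖r‖ / ‖r‖) • r‖ = max 0 (‖r‖ - c) := by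
  rcases eq_or_ne r 0 with rfl | hr
  · simp [hc]
  have hR : 0 < ‖r‖ := norm_pos_iff.2 hr
  have hcoef : 0 ≤ 1 - min c ‖r‖ / ‖r‖ :=
    sub_nonneg.2 ((div_le_one hR).2 (min_le_right _ _))
  have hmin : ‖r‖ - min c ‖r‖ = max 0 (‖r‖ - c) := by
    rcases le_total c ‖r‖ with h | h <;> simp [h]
  have hsmul : r - (min c ‖r‖ / ‖r‖) • r = (1 - min c ‖r‖ / ‖r‖) • r := by
    rw [sub_smul, one_smul]
  rw [← hmin, hsmul, norm_smul, Real.norm_of_nonneg hcoef]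
  field_simp

lemma Finset.sum_le_sum_of_card_le_of_forall_sdiff_le {ι M : Type*} [AddCommMonoid M]
    [LinearOrder M] [IsOrderedCancelAddMonoid M] [DecidableEq ι] {s t : Finset ι} {f : ι → M}
    (hcard : #s ≤ #t) (hf : ∀ j ∈ t \ s, 0 ≤ f j) (hst : ∀ i ∈ s \ t, ∀ j ∈ t \ s, f i ≤ f j) :
    ∑ i ∈ s, f i ≤ ∑ i ∈ t, f i := by
  rw [← sum_sdiff_le_sum_sdiff]
  rcases (t \ s).eq_empty_or_nonempty with hts | hts
  · have hst' : s \ t = ∅ := by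
      rw [← card_eq_zero, ← Nat.le_zero, ← card_empty, ← hts]
      exact card_sdiff_le_card_sdiff_iff.2 hcard
    simp [hst', hts]
  obtain ⟨j₀, hj₀, hmin⟩ := (t \ s).exists_min_image f hts
  calc ∑ i ∈ s \ t, f i ≤ #(s \ t) • f j₀ := sum_le_card_nsmul _ _ _ fun i hi => hst i hi j₀ hj₀
    _ ≤ #(t \ s) • f j₀ := nsmul_le_nsmul_left (hf j₀ hj₀) (card_sdiff_le_card_sdiff_iff.2 hcard)
    _ ≤ ∑ j ∈ t \ s, f j := card_nsmul_le_sum _ _ _ hmin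

section topSum

variable {p : ℕ}

lemma topSum_nonneg (k : ℕ) (β : Fin p → ℝ) : 0 ≤ topSum k β :=
  sum_nonneg fun _ _ => abs_nonneg _

lemma Fin.card_filter_sub_le_val (k : ℕ) : #{i : Fin p | p - k ≤ (i : ℕ)} = min k p := by
  have h := card_filter_add_card_filter_not (s := univ) fun i : Fin p => (i : ℕ) < p - k
  simp only [Fin.card_filter_val_lt, not_lt, card_univ, Fintype.card_fin] at h
  omega

lemma sum_sortAbs_le_topSum {k : ℕ} (β : Fin p → ℝ) {T : Finset (Fin p)} (hT : #T ≤ k) :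
    ∑ i ∈ T, sortAbs β i ≤ topSum k β := by
  apply Finset.sum_le_sum_of_card_le_of_forall_sdiff_le
  · rw [Fin.card_filter_sub_le_val]
    exact le_min hT (card_le_univ T |>.trans_eq (Fintype.card_fin p))
  · exact fun _ _ => abs_nonneg _
  · intro i hi j hj
    simp only [mem_sdiff, mem_filter, mem_univ, true_and] at hi hj
    exact Tuple.monotone_sort (fun j => |β j|) (Fin.le_def.2 (by omega))

lemma sum_abs_le_topSum {k : ℕ} (β : Fin p → ℝ) {S : Finset (Fin p)} (hS : #S ≤ k) :
    ∑ i ∈ S, |β i| ≤ topSum k β := by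
  set σ := Tuple.sort fun j => |β j|
  have hsum : ∑ i ∈ S, |β i| = ∑ j ∈ S.map σ.symm.toEmbedding, sortAbs β j := by
    simp [sortAbs, σ]
  rw [hsum]
  exact sum_sortAbs_le_topSum β (by simpa using hS)

lemma exists_card_le_sum_abs_eq_topSum (k : ℕ) (β : Fin p → ℝ) :
    ∃ S : Finset (Fin p), #S ≤ k ∧ ∑ i ∈ S, |β i| = topSum k β := by
  set top : Finset (Fin p) := {i | p - k ≤ (i : ℕ)}
  refine ⟨top.map (Tuple.sort fun j => |β j|).toEmbedding, ?_, ?_⟩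
  · rw [card_map, Fin.card_filter_sub_le_val]
    exact min_le_left k p
  · simp [top, topSum, sortAbs]

end topSum

section kColBound

variable {n p k : ℕ} {lam : ℝ}

lemma norm2_mulVec_le_of_mem_kColBound (hlam : 0 ≤ lam) {Δ : Matrix (Fin n) (Fin p) ℝ}
    (hΔ : Δ ∈ kColBound k lam) (β : Fin p → ℝ) : norm2 (Δ *ᵥ β) ≤ lam * topSum k β := by
  obtain ⟨hcard, hcol⟩ := hΔ
  set supp : Finset (Fin p) := {i | ∃ j, Δ j i ≠ 0}
  have hmv : Δ *ᵥ β = ∑ i ∈ supp, β i • fun j => Δ j i := by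
    have hzero : ∀ i ∉ supp, β i • (fun j => Δ j i) = 0 := fun i hi => by
      ext j
      simp_all [supp]
    rw [sum_subset (subset_univ supp) fun i _ hi => hzero i hi]
    ext j
    simp [mulVec, dotProduct, mul_comm]
  calc norm2 (Δ *ᵥ β) ≤ ∑ i ∈ supp, norm2 (β i • fun j => Δ j i) := hmv ▸ norm2_sum_le _ _
    _ = ∑ i ∈ supp, |β i| * norm2 fun j => Δ j i := by simp only [norm2_smul]
    _ ≤ ∑ i ∈ supp, |β i| * lam :=
      sum_le_sum fun i _ => mul_le_mul_of_nonneg_left (hcol i) (abs_nonneg _)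
    _ = lam * ∑ i ∈ supp, |β i| := by rw [← sum_mul, mul_comm]
    _ ≤ lam * topSum k β := mul_le_mul_of_nonneg_left (sum_abs_le_topSum β hcard) hlam

lemma vecMulVec_mem_kColBound {u : Fin n → ℝ} {w : Fin p → ℝ} (hu : norm2 u ≤ 1)
    (hw : #{i | w i ≠ 0} ≤ k) (hwlam : ∀ i, |w i| ≤ lam) : vecMulVec u w ∈ kColBound k lam := by
  refine ⟨(card_le_card fun i hi => ?_).trans hw, fun i => ?_⟩
  · obtain ⟨-, j, hj⟩ := mem_filter.1 hi
    exact mem_filter.2 ⟨mem_univ i, right_ne_zero_of_mul hj⟩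
  · have hcol : (fun j => vecMulVec u w j i) = w i • u := by
      ext j
      simp [vecMulVec_apply, mul_comm]
    rw [hcol, norm2_smul]
    calc |w i| * norm2 u ≤ |w i| * 1 := mul_le_mul_of_nonneg_left hu (abs_nonneg _)
      _ ≤ lam := (mul_one |w i|).trans_le (hwlam i)

lemma exists_mem_kColBound_mulVec_eq (hlam : 0 ≤ lam) (β : Fin p → ℝ) (r : Fin n → ℝ) :
    ∃ Δ ∈ kColBound k lam, Δ *ᵥ β = (min (lam * topSum k β) (norm2 r) / norm2 r) • r := by
  obtain ⟨S, hS, hSsum⟩ := exists_card_le_sum_abs_eq_topSum k β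
  set t := lam * topSum k β
  set R := norm2 r
  have ht : 0 ≤ t := mul_nonneg hlam (topSum_nonneg k β)
  -- the shrink factor; `0 / 0 = 0` makes `a * t = min t R` hold also for `t = 0`
  set a := min t R / t
  have ha0 : 0 ≤ a := div_nonneg (le_min ht (norm2_nonneg r)) ht
  have ha1 : a ≤ 1 := div_le_one_of_le₀ (min_le_left _ _) ht
  have hat : a * t = min t R := by
    rcases eq_or_ne t 0 with h | h
    · simp [a, h, R, norm2_nonneg]
    · exact div_mul_cancel₀ _ h
  set w : Fin p → ℝ := fun i => if i ∈ S then a * lam * SignType.sign (β i) else 0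
  have hwβ : w ⬝ᵥ β = a * t := by
    simp only [dotProduct, w, ite_mul, zero_mul, sum_ite_mem, univ_inter, mul_assoc,
      sign_mul_self, ← mul_sum, hSsum, t]
  refine ⟨vecMulVec (R⁻¹ • r) w, vecMulVec_mem_kColBound ?_ ?_ fun i => ?_, ?_⟩
  · rw [norm2_smul, abs_inv, abs_of_nonneg (norm2_nonneg r)]
    exact inv_mul_le_one
  · refine (card_le_card fun i hi => ?_).trans hS
    simp only [mem_filter, mem_univ, true_and, w] at hi
    exact of_not_not fun hiS => hi (if_neg hiS)
  · simp only [w]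
    split_ifs
    · have hsign : |(SignType.sign (β i) : ℝ)| ≤ 1 := by cases SignType.sign (β i) <;> simp
      rw [abs_mul, abs_of_nonneg (mul_nonneg ha0 hlam)]
      calc a * lam * |(SignType.sign (β i) : ℝ)| ≤ 1 * lam * 1 := by gcongr
        _ = lam := by ring
    · simpa using hlam
  · rw [vecMulVec_mulVec, op_smul_eq_smul, hwβ, hat, smul_smul, div_eq_mul_inv]

end kColBound

theorem minmin_robust_value_general {n p : ℕ} (y : Fin n → ℝ) (X : Matrix (Fin n) (Fin p) ℝ)
    (lam : ℝ) (hlam : 0 < lam) (k : ℕ) (β : Fin p → ℝ) :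
    IsLeast {v : ℝ | ∃ Δ ∈ kColBound (n := n) (p := p) k lam,
        v = norm2 (y - (X + Δ).mulVec β)}
      (max 0 (norm2 (y - X.mulVec β) - lam * topSum k β)) := by
  set r := y - X *ᵥ β
  have hresidual (Δ : Matrix (Fin n) (Fin p) ℝ) : y - (X + Δ) *ᵥ β = r - Δ *ᵥ β := by
    rw [add_mulVec, sub_add_eq_sub_sub]
  clear_value r
  refine ⟨?_, ?_⟩
  · obtain ⟨Δ, hΔ, hΔβ⟩ := exists_mem_kColBound_mulVec_eq (k := k) hlam.le β r
    refine ⟨Δ, hΔ, ?_⟩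
    rw [hresidual, hΔβ]
    simp only [norm2_eq_norm, WithLp.toLp_sub, WithLp.toLp_smul]
    exact (norm_sub_min_div_norm_smul_self _ (mul_nonneg hlam.le (topSum_nonneg k β))).symm
  · rintro _ ⟨Δ, hΔ, rfl⟩
    rw [hresidual]
    exact max_le (norm2_nonneg _) (by linarith [norm2_sub_norm2_le r (Δ *ᵥ β),
      norm2_mulVec_le_of_mem_kColBound hlam.le hΔ β])

/-- for every `β`, the minimum over `Δ ∈ U_k^λ` of
`‖y - (X+Δ)β‖₂` is attained and equals
`max{0, ‖y - Xβ‖₂ - λ ∑_{i=1}^k |β_(i)|}`. -/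
theorem minmin_robust_value {n p : ℕ} (y : Fin n → ℝ) (X : Matrix (Fin n) (Fin p) ℝ)
    (lam : ℝ) (hlam : 0 < lam) (k : ℕ) (hk : k ≤ p) (β : Fin p → ℝ) :
    IsLeast {v : ℝ | ∃ Δ ∈ kColBound (n := n) (p := p) k lam,
        v = norm2 (y - (X + Δ).mulVec β)}
      (max 0 (norm2 (y - X.mulVec β) - lam * topSum k β)) :=
  minmin_robust_value_general y X lam hlam k β
end

section
/- Let L : ℝ^p → ℝ be any function, μ > 0, and let g : ℝ₊ → ℝ₊ be nonnegative and nondecreasing with g(0) = 0. If β* minimizes β ↦ L(β) + μ Σ_{i=1}^p min{g(|βᵢ|), 1} over ℝ^p, then with ℓ* = |{i : g(|βᵢ*|) ≥ 1}|, β* minimizes β ↦ L(β) + μ Σ_{i>ℓ*} g(|β_(i)|) over ℝ^p. Conversely, if the pair (β*, ℓ*) minimizes (β, ℓ) ↦ L(β) + μ Σ_{i>ℓ} g(|β_(i)|) + μℓ over β ∈ ℝ^p and ℓ ∈ {0,1,…,p}, then β* minimizes β ↦ L(β) + μ Σ_{i=1}^p min{g(|βᵢ|), 1} over ℝ^p.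 -/
open Finset

/-- `∑_{i>ℓ} g(|β_(i)|) = ∑_{i=ℓ+1}^p g(|β_(i)|)`: the sum of `g` applied to the
`p - ℓ` smallest absolute values of the entries of `β`. -/
noncomputable def gTrim {p : ℕ} (g : ℝ → ℝ) (ℓ : ℕ) (β : Fin p → ℝ) : ℝ :=
  ∑ i ∈ Finset.univ.filter (fun i : Fin p => (i : ℕ) < p - ℓ), g (sortAbs β i)

/-- A down-closed finset of `Fin p` is an initial segment. -/
lemma downclosed_iff {p : ℕ} (T : Finset (Fin p))
    (hT : ∀ i j : Fin p, j ≤ i → i ∈ T → j ∈ T) (i : Fin p) :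
    i ∈ T ↔ (i : ℕ) < T.card := by
  constructor
  · intro hi
    have hsub : Finset.Iic i ⊆ T := fun j hj => hT i j (Finset.mem_Iic.mp hj) hi
    have := Finset.card_le_card hsub
    rw [Fin.card_Iic] at this
    omega
  · intro hi
    by_contra hni
    have hsub : T ⊆ Finset.Iio i := by
      intro j hj
      rw [Finset.mem_Iio]
      by_contra hji
      exact hni (hT j i (le_of_not_gt hji) hj)
    have := Finset.card_le_card hsub
    rw [Fin.card_Iio] at this
    omega

lemma card_filter_coe_lt {p m : ℕ} (hm : m ≤ p) :
    (Finset.univ.filter (fun i : Fin p => (i : ℕ) < m)).card = m := by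
  classical
  set T := Finset.univ.filter (fun i : Fin p => (i : ℕ) < m) with hTdef
  have hdc : ∀ i j : Fin p, j ≤ i → i ∈ T → j ∈ T := by
    intro i j hji hi
    simp only [hTdef, Finset.mem_filter, Finset.mem_univ, true_and] at *
    have : (j : ℕ) ≤ (i : ℕ) := hji
    omega
  have hiff := fun i => downclosed_iff T hdc i
  have hcle : T.card ≤ p := by
    have := Finset.card_le_card (Finset.subset_univ T)
    simpa using this
  rcases Nat.lt_or_ge T.card m with h | h
  · exfalso
    have hi : (⟨T.card, lt_of_lt_of_le h hm⟩ : Fin p) ∈ T := by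
      simp only [hTdef, Finset.mem_filter, Finset.mem_univ, true_and]
      exact h
    have := (hiff _).mp hi
    simp at this
  · rcases Nat.lt_or_ge m T.card with h2 | h2
    · exfalso
      have hi : (⟨m, lt_of_lt_of_le h2 hcle⟩ : Fin p) ∈ T := (hiff _).mpr h2
      simp only [hTdef, Finset.mem_filter, Finset.mem_univ, true_and] at hi
      omega
    · omega

lemma clipped_le_trim {p : ℕ} (g : ℝ → ℝ) (β : Fin p → ℝ) {ℓ : ℕ} (hℓ : ℓ ≤ p) :
    ∑ i, min (g |β i|) 1 ≤ gTrim g ℓ β + ℓ := by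
  classical
  have hsum : ∑ i, min (g |β i|) 1 = ∑ i, min (g (sortAbs β i)) 1 :=
    (Equiv.sum_comp (Tuple.sort (fun j => |β j|)) (fun i => min (g |β i|) 1)).symm
  rw [hsum, ← Finset.sum_filter_add_sum_filter_not Finset.univ
      (fun i : Fin p => (i : ℕ) < p - ℓ)]
  have h1 : ∑ i ∈ Finset.univ.filter (fun i : Fin p => (i : ℕ) < p - ℓ),
      min (g (sortAbs β i)) 1 ≤ gTrim g ℓ β :=
    Finset.sum_le_sum fun i _ => min_le_left _ _
  have h2 : ∑ i ∈ Finset.univ.filter (fun i : Fin p => ¬ (i : ℕ) < p - ℓ),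
      min (g (sortAbs β i)) 1 ≤ (ℓ : ℝ) := by
    have hcard : (Finset.univ.filter (fun i : Fin p => ¬ (i : ℕ) < p - ℓ)).card = ℓ := by
      have := Finset.card_filter_add_card_filter_not
        (s := (Finset.univ : Finset (Fin p))) (p := fun i : Fin p => (i : ℕ) < p - ℓ)
      rw [card_filter_coe_lt (Nat.sub_le p ℓ)] at this
      simp only [Finset.card_univ, Fintype.card_fin] at this
      omega
    have hle : ∑ i ∈ Finset.univ.filter (fun i : Fin p => ¬ (i : ℕ) < p - ℓ),
        min (g (sortAbs β i)) 1
        ≤ ∑ _i ∈ Finset.univ.filter (fun i : Fin p => ¬ (i : ℕ) < p - ℓ), (1 : ℝ) :=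
      Finset.sum_le_sum fun i _ => min_le_right _ _
    rw [Finset.sum_const, hcard] at hle
    simpa using hle
  linarith

lemma clipped_eq_trim {p : ℕ} (g : ℝ → ℝ)
    (hmono : MonotoneOn g (Set.Ici (0 : ℝ))) (β : Fin p → ℝ) :
    ∑ i, min (g |β i|) 1
      = gTrim g ((Finset.univ.filter (fun i => 1 ≤ g |β i|)).card) β
        + ((Finset.univ.filter (fun i => 1 ≤ g |β i|)).card : ℝ) := by
  classical
  set σ := Tuple.sort (fun j => |β j|) with hσ
  set ℓ := (Finset.univ.filter (fun i => 1 ≤ g |β i|)).card with hℓ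
  have hs_mono : Monotone (sortAbs β) := Tuple.monotone_sort (fun j => |β j|)
  have hh_mono : Monotone (fun i => g (sortAbs β i)) := fun i j hij =>
    hmono (Set.mem_Ici.mpr (abs_nonneg _)) (Set.mem_Ici.mpr (abs_nonneg _)) (hs_mono hij)
  set T := Finset.univ.filter (fun i : Fin p => ¬ 1 ≤ g (sortAbs β i)) with hT
  have hdc : ∀ i j : Fin p, j ≤ i → i ∈ T → j ∈ T := by
    intro i j hji hi
    simp only [hT, Finset.mem_filter, Finset.mem_univ, true_and] at *
    intro h1
    exact hi (h1.trans (hh_mono hji))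
  have hScard : (Finset.univ.filter (fun i : Fin p => 1 ≤ g (sortAbs β i))).card = ℓ := by
    rw [hℓ, Finset.card_filter, Finset.card_filter]
    exact Equiv.sum_comp σ (fun i => if 1 ≤ g |β i| then 1 else 0)
  have hTcard : T.card = p - ℓ := by
    have := Finset.card_filter_add_card_filter_not
      (s := (Finset.univ : Finset (Fin p))) (p := fun i : Fin p => 1 ≤ g (sortAbs β i))
    rw [hScard] at this
    simp only [Finset.card_univ, Fintype.card_fin] at this
    have he : Finset.filter (fun a : Fin p => ¬1 ≤ g (sortAbs β a)) Finset.univ = T := by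
      ext i
      simp [hT]
    rw [he] at this
    omega
  have hiff : ∀ i : Fin p, (i : ℕ) < p - ℓ ↔ ¬ 1 ≤ g (sortAbs β i) := by
    intro i
    rw [← hTcard, ← downclosed_iff T hdc i, hT]
    simp
  have hsum : ∑ i, min (g |β i|) 1 = ∑ i, min (g (sortAbs β i)) 1 :=
    (Equiv.sum_comp σ (fun i => min (g |β i|) 1)).symm
  rw [hsum, ← Finset.sum_filter_add_sum_filter_not Finset.univ
      (fun i : Fin p => (i : ℕ) < p - ℓ)]
  congr 1
  · unfold gTrim
    apply Finset.sum_congr rfl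
    intro i hi
    simp only [Finset.mem_filter, Finset.mem_univ, true_and] at hi
    exact min_eq_left (le_of_lt (lt_of_not_ge ((hiff i).mp hi)))
  · have hall : ∀ i ∈ Finset.univ.filter (fun i : Fin p => ¬ (i : ℕ) < p - ℓ),
        min (g (sortAbs β i)) 1 = 1 := by
      intro i hi
      simp only [Finset.mem_filter, Finset.mem_univ, true_and] at hi
      have h1 : 1 ≤ g (sortAbs β i) := by
        by_contra hc
        exact hi ((hiff i).mpr hc)
      exact min_eq_right h1
    have hfe : Finset.univ.filter (fun i : Fin p => ¬ (i : ℕ) < p - ℓ)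
        = Finset.univ.filter (fun i : Fin p => 1 ≤ g (sortAbs β i)) := by
      ext i
      simp only [Finset.mem_filter, Finset.mem_univ, true_and]
      rw [hiff i]
      tauto
    rw [Finset.sum_congr rfl hall, Finset.sum_const, hfe, hScard]
    simp

/-- Theorem 4.1: for `L : ℝ^p → ℝ`, `μ > 0` and `g ≥ 0`
nondecreasing with `g(0) = 0`: if `β*` minimizes `L(β) + μ∑ᵢ min{g(|βᵢ|),1}`,
then with `ℓ* = |{i : g(|βᵢ*|) ≥ 1}|`, `β*` minimizes
`L(β) + μ∑_{i>ℓ*} g(|β_(i)|)`.  Conversely, if `(β*, ℓ*)` minimizes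
`L(β) + μ∑_{i>ℓ} g(|β_(i)|) + μℓ` over `β` and `ℓ ∈ {0,…,p}`, then `β*`
minimizes `L(β) + μ∑ᵢ min{g(|βᵢ|),1}`. -/
theorem clipped_vs_trimmed {p : ℕ} (L : (Fin p → ℝ) → ℝ) (μ : ℝ) (hμ : 0 < μ)
    (g : ℝ → ℝ) (hg0 : g 0 = 0) (hnonneg : ∀ x, 0 ≤ x → 0 ≤ g x)
    (hmono : MonotoneOn g (Set.Ici (0 : ℝ))) :
    (∀ βs : Fin p → ℝ,
      (∀ β, L βs + μ * ∑ i, min (g |βs i|) 1 ≤ L β + μ * ∑ i, min (g |β i|) 1) →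
      ∀ β, L βs + μ * gTrim g ((Finset.univ.filter (fun i => 1 ≤ g |βs i|)).card) βs ≤
        L β + μ * gTrim g ((Finset.univ.filter (fun i => 1 ≤ g |βs i|)).card) β) ∧
    (∀ (βs : Fin p → ℝ) (ℓs : ℕ), ℓs ≤ p →
      (∀ (β : Fin p → ℝ) (ℓ : ℕ), ℓ ≤ p →
        L βs + μ * gTrim g ℓs βs + μ * ℓs ≤ L β + μ * gTrim g ℓ β + μ * ℓ) →
      ∀ β, L βs + μ * ∑ i, min (g |βs i|) 1 ≤ L β + μ * ∑ i, min (g |β i|) 1) := by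
  constructor
  · intro βs hmin β
    set ℓs := (Finset.univ.filter (fun i => 1 ≤ g |βs i|)).card with hℓs
    have hℓsle : ℓs ≤ p := by
      have := Finset.card_le_card (Finset.subset_univ
        (Finset.univ.filter (fun i => 1 ≤ g |βs i|)))
      simpa [hℓs] using this
    have heq := clipped_eq_trim g hmono βs
    have hle := clipped_le_trim g β hℓsle
    have h1 : μ * ∑ i, min (g |βs i|) 1 = μ * gTrim g ℓs βs + μ * (ℓs : ℝ) := by
      rw [heq]; ring
    have h2 : μ * ∑ i, min (g |β i|) 1 ≤ μ * gTrim g ℓs β + μ * (ℓs : ℝ) := by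
      calc μ * ∑ i, min (g |β i|) 1 ≤ μ * (gTrim g ℓs β + (ℓs : ℝ)) :=
            mul_le_mul_of_nonneg_left hle hμ.le
        _ = μ * gTrim g ℓs β + μ * (ℓs : ℝ) := by ring
    have h := hmin β
    linarith
  · intro βs ℓs hℓs hmin β
    set ℓβ := (Finset.univ.filter (fun i => 1 ≤ g |β i|)).card with hℓβ
    have hℓβle : ℓβ ≤ p := by
      have := Finset.card_le_card (Finset.subset_univ
        (Finset.univ.filter (fun i => 1 ≤ g |β i|)))
      simpa [hℓβ] using this
    have heqβ := clipped_eq_trim g hmono β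
    have hleβs := clipped_le_trim g βs hℓs
    have h := hmin β ℓβ hℓβle
    have h1 : μ * ∑ i, min (g |β i|) 1 = μ * gTrim g ℓβ β + μ * (ℓβ : ℝ) := by
      rw [heqβ]; ring
    have h2 : μ * ∑ i, min (g |βs i|) 1 ≤ μ * gTrim g ℓs βs + μ * (ℓs : ℝ) := by
      calc μ * ∑ i, min (g |βs i|) 1 ≤ μ * (gTrim g ℓs βs + (ℓs : ℝ)) :=
            mul_le_mul_of_nonneg_left hleβs hμ.le
        _ = μ * gTrim g ℓs βs + μ * (ℓs : ℝ) := by ring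
    linarith
end

section
/- For every k ∈ {0,1,…,p}, the function β ↦ max{0, ‖β‖₁ − k} is the convex envelope of the trimmed Lasso penalty T_k on the cube [−1,1]^p; that is: (i) β ↦ max{0, ‖β‖₁ − k} is convex; (ii) max{0, ‖β‖₁ − k} ≤ T_k(β) for all β ∈ [−1,1]^p; and (iii) for every convex function h : ℝ^p → ℝ satisfying h(β) ≤ T_k(β) for all β ∈ [−1,1]^p, one has h(β) ≤ max{0, ‖β‖₁ − k} for all β ∈ [−1,1]^p. -/
open Finset

/-!
The lower bound holds because `T_k(β) = ‖β‖₁ - (sum of the k largest |β_i|) ≥ ‖β‖₁ - k` on the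
cube. For the envelope property, sign flips reduce to `a ∈ [0,1]^p`. With `m = ⌊∑ a⌋`, the point
`a` lies in the slab `{x ∈ [0,1]^p | m ≤ ∑ x ≤ m + 1}`, whose extreme points are `{0,1}`-vectors:
a point with a fractional coordinate can be moved in two opposite directions inside the slab
(along `e_i - e_j` if there is a second fractional coordinate, along `e_i` otherwise, since
then `∑ x` is not an integer). By Krein–Milman, `a` is a convex combination of such vertices
`b`. On the slab, `max 0 (∑ x - k)` is affine, and at each vertex it equals `T_k(b) ≥ h(b)`, so
the convex function `h` stays below it at `a`.
-/

section TrimmedLasso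

variable {p : ℕ}

/-- The sum of the `k` largest `|β i|`. -/
noncomputable def topAbsSum (k : ℕ) (β : Fin p → ℝ) : ℝ :=
  ∑ i ∈ univ.filter (fun i : Fin p => ¬ (i : ℕ) < p - k), sortAbs β i

lemma sortAbs_monotone (β : Fin p → ℝ) : Monotone (sortAbs β) :=
  Tuple.monotone_sort fun j => |β j|

lemma sum_sortAbs (β : Fin p → ℝ) : ∑ i, sortAbs β i = l1 β :=
  Equiv.sum_comp (Tuple.sort fun j => |β j|) fun j => |β j|

lemma trimmedLasso_add_topAbsSum (k : ℕ) (β : Fin p → ℝ) :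
    trimmedLasso k β + topAbsSum k β = l1 β := by
  rw [← sum_sortAbs]
  exact sum_filter_add_sum_filter_not _ _ _

lemma trimmedLasso_congr_abs (k : ℕ) {β γ : Fin p → ℝ} (h : ∀ i, |β i| = |γ i|) :
    trimmedLasso k β = trimmedLasso k γ := by
  simp only [trimmedLasso, sortAbs, h]

lemma card_filter_not_lt_sub {k : ℕ} (hk : k ≤ p) :
    #{i : Fin p | ¬ (i : ℕ) < p - k} = k := by
  have := card_filter_add_card_filter_not (s := (univ : Finset (Fin p))) fun i => (i : ℕ) < p - k
  rw [Fin.card_filter_val_lt, card_univ, Fintype.card_fin] at this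
  omega

lemma max_zero_l1_sub_le_trimmedLasso {k : ℕ} (hk : k ≤ p) {β : Fin p → ℝ}
    (hβ : ∀ i, |β i| ≤ 1) : max 0 (l1 β - k) ≤ trimmedLasso k β := by
  have htop : topAbsSum k β ≤ k := by
    calc topAbsSum k β ≤ #{i : Fin p | ¬ (i : ℕ) < p - k} • (1 : ℝ) :=
          sum_le_card_nsmul _ _ _ fun i _ => hβ _
      _ = k := by rw [card_filter_not_lt_sub hk, nsmul_one]
  have hsplit := trimmedLasso_add_topAbsSum k β
  exact max_le (sum_nonneg fun i _ => abs_nonneg _) (by linarith)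

lemma trimmedLasso_le_of_zero_one {k : ℕ} (hk : k ≤ p) {b : Fin p → ℝ}
    (hb : ∀ i, b i = 0 ∨ b i = 1) : trimmedLasso k b ≤ max 0 (l1 b - k) := by
  have hsort : ∀ i, sortAbs b i = 0 ∨ sortAbs b i = 1 := fun i => by
    rcases hb (Tuple.sort (fun j => |b j|) i) with h | h <;> simp [sortAbs, h]
  by_cases hlow : ∀ i ∈ ({i : Fin p | (i : ℕ) < p - k} : Finset _), sortAbs b i = 0
  · exact (sum_eq_zero hlow).trans_le (le_max_left _ _)
  push Not at hlow
  obtain ⟨j, hj, hj0⟩ := hlow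
  rw [mem_filter] at hj
  have hj1 := (hsort j).resolve_left hj0
  -- a `1` among the `p - k` smallest entries forces the `k` largest ones to be `1`
  have htop : topAbsSum k b = k := by
    rw [topAbsSum, sum_congr rfl fun i hi => ?_, sum_const, card_filter_not_lt_sub hk, nsmul_one]
    rw [mem_filter] at hi
    have : sortAbs b j ≤ sortAbs b i := sortAbs_monotone b (Fin.le_def.mpr (by omega))
    exact (hsort i).resolve_left (by linarith)
  have hsplit := trimmedLasso_add_topAbsSum k b
  exact le_max_of_le_right (by linarith)

lemma convexOn_l1 : ConvexOn ℝ Set.univ (l1 : (Fin p → ℝ) → ℝ) := by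
  have hl1 : (l1 : (Fin p → ℝ) → ℝ) = fun β => ‖WithLp.toLp 1 β‖ := by
    ext β
    simp [l1, PiLp.norm_eq_of_L1]
  rw [hl1]
  exact convexOn_univ_norm.comp_linearMap (WithLp.linearEquiv 1 ℝ (Fin p → ℝ)).symm.toLinearMap

end TrimmedLasso

lemma exists_int_sum_eq_of_zero_one {ι : Type*} {s : Finset ι} {a : ι → ℝ}
    (ha : ∀ i ∈ s, a i = 0 ∨ a i = 1) : ∃ z : ℤ, ∑ i ∈ s, a i = z :=
  sum_induction a (fun y => ∃ z : ℤ, y = z)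
    (fun _ _ ⟨z, hz⟩ ⟨w, hw⟩ => ⟨z + w, by rw [hz, hw, Int.cast_add]⟩) ⟨0, by simp⟩
    fun i hi => (ha i hi).elim (fun h => ⟨0, by simp [h]⟩) fun h => ⟨1, by simp [h]⟩

lemma notMem_extremePoints_of_add_mem_of_sub_mem {E : Type*} [AddCommGroup E] [Module ℝ E]
    {A : Set E} {x d : E} (hd : d ≠ 0) (hadd : x + d ∈ A) (hsub : x - d ∈ A) :
    x ∉ A.extremePoints ℝ := by
  intro hx
  have hseg : x ∈ openSegment ℝ (x + d) (x - d) :=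
    ⟨1 / 2, 1 / 2, by norm_num, by norm_num, by norm_num, by module⟩
  exact hd (by simpa using ((mem_extremePoints.mp hx).2 _ hadd _ hsub hseg).1)

lemma ConvexOn.le_of_mem_convexHull_of_le {E : Type*} [AddCommGroup E] [Module ℝ E]
    {s V : Set E} {f g : E → ℝ} (hf : ConvexOn ℝ s f) (hg : ConcaveOn ℝ s g) (hVs : V ⊆ s)
    (hV : ∀ x ∈ V, f x ≤ g x) {x : E} (hx : x ∈ convexHull ℝ V) : f x ≤ g x := by
  have hsub : convexHull ℝ V ⊆ {y | y ∈ s ∧ (f - g) y ≤ 0} :=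
    convexHull_min (fun y hy => ⟨hVs hy, sub_nonpos.mpr (hV y hy)⟩) ((hf.sub hg).convex_le 0)
  exact sub_nonpos.mp (hsub hx).2

lemma max_zero_sub_eq_of_mem_Icc {m k : ℤ} {t : ℝ} (ht : t ∈ Set.Icc (m : ℝ) (m + 1)) :
    max 0 (t - k) = if k ≤ m then t - k else 0 := by
  split_ifs with hkm
  · have : (k : ℝ) ≤ m := by exact_mod_cast hkm
    exact max_eq_right (by linarith [ht.1])
  · have : (m : ℝ) + 1 ≤ k := by exact_mod_cast (by omega : m + 1 ≤ k)
    exact max_eq_left (by linarith [ht.2])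

section CubeSlab

variable {ι : Type*} [Fintype ι]

lemma sum_ne_int_of_forall_ne_zero_one {a : ι → ℝ} {i : ι} (hi : a i ∈ Set.Ioo 0 1)
    (h : ∀ j ≠ i, a j = 0 ∨ a j = 1) (z : ℤ) : ∑ j, a j ≠ z := by
  classical
  obtain ⟨w, hw⟩ := exists_int_sum_eq_of_zero_one fun j hj => h j (ne_of_mem_erase hj)
  rw [← add_sum_erase _ _ (mem_univ i), hw]
  intro heq
  have hai : a i = ((z - w : ℤ) : ℝ) := by push_cast; linarith
  rw [hai] at hi
  obtain ⟨h0, h1⟩ := hi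
  norm_cast at h0 h1
  omega

def cubeSlab (ι : Type*) [Fintype ι] (m n : ℤ) : Set (ι → ℝ) :=
  Set.Icc 0 1 ∩ {x | (m : ℝ) ≤ ∑ i, x i ∧ ∑ i, x i ≤ n}

lemma convex_cubeSlab (m n : ℤ) : Convex ℝ (cubeSlab ι m n) := by
  refine (convex_Icc 0 1).inter ?_
  convert (convex_Icc (m : ℝ) n).linear_preimage (∑ i, LinearMap.proj i : (ι → ℝ) →ₗ[ℝ] ℝ)
  ext x
  simp

lemma isCompact_cubeSlab (m n : ℤ) : IsCompact (cubeSlab ι m n) := by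
  have hsum : Continuous fun x : ι → ℝ => ∑ i, x i := by fun_prop
  exact isCompact_Icc.inter_right
    ((isClosed_le continuous_const hsum).inter (isClosed_le hsum continuous_const))

lemma add_mem_cubeSlab {m n : ℤ} {a d : ι → ℝ} (ha : a ∈ cubeSlab ι m n)
    (hd : ∀ i, |d i| ≤ min (a i) (1 - a i))
    (hsum : |∑ i, d i| ≤ min (∑ i, a i - m) (n - ∑ i, a i)) : a + d ∈ cubeSlab ι m n := by
  obtain ⟨-, hm, hn⟩ := ha
  simp only [le_min_iff, abs_le] at hsum
  have hd' : ∀ i, -a i ≤ d i ∧ d i ≤ 1 - a i := fun i => by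
    have := hd i
    simp only [le_min_iff, abs_le] at this
    constructor <;> linarith
  refine ⟨⟨fun i => ?_, fun i => ?_⟩, ?_, ?_⟩ <;>
    simp only [Pi.add_apply, Pi.zero_apply, Pi.one_apply, sum_add_distrib]
  · linarith [hd' i]
  · linarith [hd' i]
  · linarith
  · linarith

lemma exists_add_mem_sub_mem_cubeSlab {m n : ℤ} {a : ι → ℝ} (ha : a ∈ cubeSlab ι m n) {i : ι}
    (hi : a i ∈ Set.Ioo 0 1) : ∃ d ≠ 0, a + d ∈ cubeSlab ι m n ∧ a - d ∈ cubeSlab ι m n := by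
  classical
  suffices ∃ d : ι → ℝ, d ≠ 0 ∧ (∀ j, |d j| ≤ min (a j) (1 - a j)) ∧
      |∑ j, d j| ≤ min (∑ j, a j - m) (n - ∑ j, a j) by
    obtain ⟨d, hd0, hd, hsum⟩ := this
    refine ⟨d, hd0, add_mem_cubeSlab ha hd hsum, ?_⟩
    rw [sub_eq_add_neg]
    exact add_mem_cubeSlab ha (by simpa using hd) (by simpa [sum_neg_distrib] using hsum)
  have hcube : ∀ j, 0 ≤ min (a j) (1 - a j) := fun j =>
    le_min (ha.1.1 j) (sub_nonneg.mpr (ha.1.2 j))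
  by_cases h01 : ∀ j ≠ i, a j = 0 ∨ a j = 1
  · have hm : (m : ℝ) < ∑ j, a j := ha.2.1.lt_of_ne (sum_ne_int_of_forall_ne_zero_one hi h01 m).symm
    have hn : ∑ j, a j < n := ha.2.2.lt_of_ne (sum_ne_int_of_forall_ne_zero_one hi h01 n)
    set ε := min (min (a i) (1 - a i)) (min (∑ j, a j - m) (n - ∑ j, a j))
    have hε : 0 < ε :=
      lt_min (lt_min hi.1 (sub_pos.mpr hi.2)) (lt_min (sub_pos.mpr hm) (sub_pos.mpr hn))
    refine ⟨(Pi.single i ε : ι → ℝ), by simpa using hε.ne', fun j => ?_, ?_⟩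
    · rcases eq_or_ne j i with rfl | hj
      · simp [abs_of_pos hε, ε]
      · simpa [hj] using hcube j
    · simp [abs_of_pos hε, ε]
  · push Not at h01
    obtain ⟨j, hji, hj0, hj1⟩ := h01
    have hj : a j ∈ Set.Ioo 0 1 := ⟨(ha.1.1 j).lt_of_ne' hj0, (ha.1.2 j).lt_of_ne hj1⟩
    set ε := min (min (a i) (1 - a i)) (min (a j) (1 - a j))
    have hε : 0 < ε := lt_min (lt_min hi.1 (sub_pos.mpr hi.2)) (lt_min hj.1 (sub_pos.mpr hj.2))
    refine ⟨(Pi.single i ε - Pi.single j ε : ι → ℝ), fun h => ?_, fun l => ?_, ?_⟩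
    · have := congrFun h i
      simp [hji.symm] at this
      exact hε.ne' this
    · rcases eq_or_ne l i with rfl | hli
      · simp [hji.symm, abs_of_pos hε, ε]
      rcases eq_or_ne l j with rfl | hlj
      · simp [hji, abs_of_pos hε, ε]
      simpa [hli, hlj] using hcube l
    · simpa [sum_sub_distrib] using le_min (sub_nonneg.mpr ha.2.1) (sub_nonneg.mpr ha.2.2)

lemma extremePoints_cubeSlab_subset (m n : ℤ) :
    (cubeSlab ι m n).extremePoints ℝ ⊆ {x | ∀ i, x i = 0 ∨ x i = 1} := by
  intro a ha i
  by_contra hi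
  push Not at hi
  have hfrac : a i ∈ Set.Ioo 0 1 := ⟨(ha.1.1.1 i).lt_of_ne' hi.1, (ha.1.1.2 i).lt_of_ne hi.2⟩
  obtain ⟨d, hd, hadd, hsub⟩ := exists_add_mem_sub_mem_cubeSlab ha.1 hfrac
  exact notMem_extremePoints_of_add_mem_of_sub_mem hd hadd hsub ha

lemma cubeSlab_subset_convexHull (m n : ℤ) :
    cubeSlab ι m n ⊆ convexHull ℝ (cubeSlab ι m n ∩ {x | ∀ i, x i = 0 ∨ x i = 1}) := by
  have hfin : (cubeSlab ι m n ∩ {x | ∀ i, x i = 0 ∨ x i = 1}).Finite :=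
    (Set.Finite.pi fun _ => Set.toFinite {0, 1}).subset fun x hx i _ => hx.2 i
  calc cubeSlab ι m n = closure (convexHull ℝ ((cubeSlab ι m n).extremePoints ℝ)) :=
        (closure_convexHull_extremePoints (isCompact_cubeSlab m n) (convex_cubeSlab m n)).symm
    _ ⊆ closure (convexHull ℝ (cubeSlab ι m n ∩ {x | ∀ i, x i = 0 ∨ x i = 1})) :=
        closure_mono (convexHull_mono
          (Set.subset_inter extremePoints_subset (extremePoints_cubeSlab_subset m n)))
    _ = _ := (hfin.isClosed_convexHull ℝ).closure_eq

end CubeSlab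

section Envelope

variable {p : ℕ}

lemma le_max_zero_sum_sub_of_convexOn_of_mem_Icc {k : ℕ} (hk : k ≤ p) {h : (Fin p → ℝ) → ℝ}
    (hconv : ConvexOn ℝ Set.univ h)
    (hmin : ∀ β : Fin p → ℝ, (∀ i, |β i| ≤ 1) → h β ≤ trimmedLasso k β)
    {a : Fin p → ℝ} (ha : a ∈ Set.Icc 0 1) : h a ≤ max 0 (∑ i, a i - k) := by
  set m := ⌊∑ i, a i⌋
  have hslab : ∀ x ∈ cubeSlab (Fin p) m (m + 1),
      max 0 (∑ i, x i - k) = if (k : ℤ) ≤ m then ∑ i, x i - k else 0 := fun x hx => by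
    simpa using max_zero_sub_eq_of_mem_Icc (k := k) ⟨hx.2.1, by exact_mod_cast hx.2.2⟩
  have haffine : ConcaveOn ℝ Set.univ fun x : Fin p → ℝ =>
      if (k : ℤ) ≤ m then ∑ i, x i - k else 0 := by
    split_ifs
    · have hlin : (fun x : Fin p → ℝ => ∑ i, x i - k) =
          fun x => (∑ i, LinearMap.proj i : (Fin p → ℝ) →ₗ[ℝ] ℝ) x + -k := by
        ext x
        simp [sub_eq_add_neg]
      rw [hlin]
      exact (LinearMap.concaveOn _ convex_univ).add_const _
    · exact concaveOn_const 0 convex_univ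
  have haS : a ∈ cubeSlab (Fin p) m (m + 1) :=
    ⟨ha, Int.floor_le _, by push_cast; exact (Int.lt_floor_add_one _).le⟩
  rw [hslab a haS]
  refine hconv.le_of_mem_convexHull_of_le haffine (Set.subset_univ _) ?_
    (cubeSlab_subset_convexHull _ _ haS)
  rintro b ⟨hbS, hb⟩
  have hcube : ∀ i, |b i| ≤ 1 := fun i => by rcases hb i with h | h <;> simp [h]
  have hl1 : l1 b = ∑ i, b i := sum_congr rfl fun i _ => abs_of_nonneg (hbS.1.1 i)
  rw [← hslab b hbS, ← hl1]
  exact (hmin b hcube).trans (trimmedLasso_le_of_zero_one hk hb)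

lemma le_max_zero_l1_sub_of_convexOn {k : ℕ} (hk : k ≤ p) {h : (Fin p → ℝ) → ℝ}
    (hconv : ConvexOn ℝ Set.univ h)
    (hmin : ∀ β : Fin p → ℝ, (∀ i, |β i| ≤ 1) → h β ≤ trimmedLasso k β)
    {β : Fin p → ℝ} (hβ : ∀ i, |β i| ≤ 1) : h β ≤ max 0 (l1 β - k) := by
  set ε : Fin p → ℝ := fun i => if β i < 0 then -1 else 1
  have habs : ∀ (y : Fin p → ℝ) i, |(ε * y) i| = |y i| := fun y i => by
    by_cases hi : β i < 0 <;> simp [ε, hi]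
  have hεβ : ε * (fun i => |β i|) = β := funext fun i => by
    by_cases hi : β i < 0
    · simp [ε, hi, abs_of_neg hi]
    · simp [ε, hi, abs_of_nonneg (not_lt.mp hi)]
  have key := le_max_zero_sum_sub_of_convexOn_of_mem_Icc hk
    (hconv.comp_linearMap (LinearMap.mulLeft ℝ ε))
    (fun y hy => by
      simpa [trimmedLasso_congr_abs k (habs y)] using
        hmin (ε * y) fun i => (habs y i).trans_le (hy i))
    (a := fun i => |β i|) ⟨fun i => abs_nonneg _, hβ⟩
  simpa [hεβ, l1] using key

end Envelope

/-- Lemma 5.1: `β ↦ max{0, ‖β‖₁ - k}` is the convex envelope of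
the trimmed Lasso penalty `T_k` on `[-1,1]^p`: it is convex, it minorizes `T_k`
on `[-1,1]^p`, and it majorizes (on `[-1,1]^p`) every convex function that
minorizes `T_k` on `[-1,1]^p`. -/
theorem trimmedLasso_convex_envelope {p : ℕ} (k : ℕ) (hk : k ≤ p) :
    ConvexOn ℝ (Set.univ : Set (Fin p → ℝ)) (fun β => max 0 (l1 β - (k : ℝ))) ∧
    (∀ β : Fin p → ℝ, (∀ i, |β i| ≤ 1) →
      max 0 (l1 β - (k : ℝ)) ≤ trimmedLasso k β) ∧
    (∀ h : (Fin p → ℝ) → ℝ, ConvexOn ℝ (Set.univ : Set (Fin p → ℝ)) h →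
      (∀ β : Fin p → ℝ, (∀ i, |β i| ≤ 1) → h β ≤ trimmedLasso k β) →
      ∀ β : Fin p → ℝ, (∀ i, |β i| ≤ 1) → h β ≤ max 0 (l1 β - (k : ℝ))) :=
  ⟨(convexOn_const 0 convex_univ).sup (convexOn_l1.sub (concaveOn_const _ convex_univ)),
    fun _ hβ => max_zero_l1_sub_le_trimmedLasso hk hβ,
    fun _ hconv hmin _ hβ => le_max_zero_l1_sub_of_convexOn hk hconv hmin hβ⟩
end
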